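/- A choice function c on a finite nonempty set X is a choice with minimal limited attention if and only if the following three conditions hold: (i) the revealed preference P is asymmetric and acyclic; (ii) there are no menu A, x ∈ A∖{c(A)} and y ∈ A such that (A∖{x},A) is not a switch, (A∖{x,y},A∖{x}) is not a switch, and (A∖{y},A) is a switch; (iii) there are no menu A, x ∈ A∖{c(A)} and y ∈ A such that (A∖{x},A) is not a switch, (A∖{y},A) is not a switch, and (A∖{x,y},A∖{x}) is a switch. -/

import Mathlib

variable {α : Type*}

/-- max(S,≻): the elements of S that no element of S beats. -/
def maxSet (r : α → α → Prop) (S : Set α) : Set α := {z | z ∈ S ∧ ∀ w ∈ S, ¬ r w z}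

/-- A linear order: asymmetric, transitive and complete binary relation. -/
def IsLinearRel (r : α → α → Prop) : Prop :=
  (∀ x y, r x y → ¬ r y x) ∧ (∀ x y z, r x y → r y z → r x z) ∧
    (∀ x y, x ≠ y → r x y ∨ r y x)

/-- (C,D) is a switch for c: both are menus, C ⊆ D, and c(C) ≠ c(D) ∈ C. -/
def SwitchPair (c : Finset α → α) (C D : Finset α) : Prop :=
  C.Nonempty ∧ D.Nonempty ∧ C ⊆ D ∧ c C ≠ c D ∧ c D ∈ C

/-- (A∖{x},A) is a minimal switch for c. -/
def SwitchAt [DecidableEq α] (c : Finset α → α) (A : Finset α) (x : α) : Prop :=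
  x ∈ A ∧ (A.erase x).Nonempty ∧ x ≠ c A ∧ c A ≠ c (A.erase x)

/-- Γ^min(A) = S_A ∪ {c(A)}. -/
def GammaMin [DecidableEq α] (c : Finset α → α) (A : Finset α) : Set α :=
  insert (c A) {x | SwitchAt c A x}

/-- Revealed preference: x P y iff x ≠ y and x = c(A) ≠ c(A∖{y}) for some menu A ∋ x,y. -/
def PRel [DecidableEq α] (c : Finset α → α) (x y : α) : Prop :=
  x ≠ y ∧ ∃ A : Finset α, x ∈ A ∧ y ∈ A ∧ c A = x ∧ c A ≠ c (A.erase y)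

/-- Acyclicity of a binary relation: no cycle x₁ ≻ x₂ ≻ ⋯ ≻ xₙ ≻ x₁. -/
def AcyclicRel (r : α → α → Prop) : Prop := ∀ x : α, ¬ Relation.TransGen r x x

section Aux
variable [DecidableEq α]

lemma switchPair_iff_switchAt (c : Finset α → α) (hc : ∀ A : Finset α, A.Nonempty → c A ∈ A)
    {A : Finset α} (hA : A.Nonempty) {x : α} (hx : x ∈ A) :
    SwitchPair c (A.erase x) A ↔ SwitchAt c A x := by
  constructor
  · rintro ⟨h1, _, _, h4, h5⟩
    exact ⟨hx, h1, fun he => (Finset.mem_erase.1 h5).1 he.symm, h4.symm⟩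
  · rintro ⟨_, hne, hxc, hcc⟩
    exact ⟨hne, hA, Finset.erase_subset _ _, hcc.symm,
      Finset.mem_erase.2 ⟨Ne.symm hxc, hc A hA⟩⟩

lemma switchPair_mem (c : Finset α → α) {A : Finset α} {y : α}
    (h : SwitchPair c (A.erase y) A) : y ∈ A := by
  by_contra hy
  rw [Finset.erase_eq_of_notMem hy] at h
  exact h.2.2.2.1 rfl

lemma mem_gammaMin (c : Finset α → α) (A : Finset α) (z : α) :
    z ∈ GammaMin c A ↔ z = c A ∨ SwitchAt c A z := Set.mem_insert_iff

end Aux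


/-- characterization of choices with minimal limited attention. -/
theorem stmt_11 [Fintype α] [DecidableEq α] [Nonempty α]
    (c : Finset α → α) (hc : ∀ A : Finset α, A.Nonempty → c A ∈ A) :
    (∃ rhd : α → α → Prop, IsLinearRel rhd ∧
      (∀ A : Finset α, A.Nonempty → maxSet rhd (GammaMin c A) = {c A}) ∧
      (∀ A : Finset α, A.Nonempty → ∀ x ∈ A, x ∉ GammaMin c A →
        GammaMin c (A.erase x) = GammaMin c A)) ↔
    (((∀ x y : α, PRel c x y → ¬ PRel c y x) ∧ AcyclicRel (PRel c)) ∧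
      (¬ ∃ (A : Finset α) (x y : α), A.Nonempty ∧ x ∈ A ∧ x ≠ c A ∧ y ∈ A ∧
        ¬ SwitchPair c (A.erase x) A ∧
        ¬ SwitchPair c ((A.erase x).erase y) (A.erase x) ∧
        SwitchPair c (A.erase y) A) ∧
      (¬ ∃ (A : Finset α) (x y : α), A.Nonempty ∧ x ∈ A ∧ x ≠ c A ∧ y ∈ A ∧
        ¬ SwitchPair c (A.erase x) A ∧
        ¬ SwitchPair c (A.erase y) A ∧
        SwitchPair c ((A.erase x).erase y) (A.erase x))) := by
  constructor
  · rintro ⟨r, ⟨rasym, rtrans, rtot⟩, hmax, hstab⟩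
    -- P ⊆ r
    have hPr : ∀ x y, PRel c x y → r x y := by
      rintro x y ⟨hxy, A, hxA, hyA, hcx, hcne⟩
      have hA : A.Nonempty := ⟨x, hxA⟩
      have hy : SwitchAt c A y :=
        ⟨hyA, ⟨x, Finset.mem_erase.2 ⟨hxy, hxA⟩⟩,
          fun h => hxy ((hcx ▸ h).symm), hcne⟩
      have hmem : c A ∈ maxSet r (GammaMin c A) := by
        rw [hmax A hA]; exact rfl
      have hnyx : ¬ r y x := hcx ▸ hmem.2 y (Or.inr hy)
      rcases rtot x y hxy with h | h
      · exact h
      · exact absurd h hnyx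
    have hirr : ∀ x, ¬ r x x := fun x h => rasym x x h h
    have htr : Transitive r := fun {a b c'} h1 h2 => rtrans _ _ _ h1 h2
    refine ⟨⟨fun x y hxy hyx => rasym x y (hPr _ _ hxy) (hPr _ _ hyx), ?_⟩, ?_, ?_⟩
    · intro x hx
      have : Relation.TransGen r x x := Relation.TransGen.mono hPr x x hx
      rw [@Relation.transGen_eq_self _ r ⟨fun a b c' h1 h2 => htr h1 h2⟩] at this
      exact hirr x this
    -- key: x not in Gamma(A) gives Gamma and choice stability
    all_goals {
      have key : ∀ A : Finset α, A.Nonempty → ∀ x ∈ A, x ≠ c A → ¬ SwitchAt c A x →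
          GammaMin c (A.erase x) = GammaMin c A ∧ c (A.erase x) = c A := by
        intro A hA x hxA hxc hns
        have hxG : x ∉ GammaMin c A := by
          rw [mem_gammaMin]; rintro (h | h); exacts [hxc h, hns h]
        have hG := hstab A hA x hxA hxG
        have hne : (A.erase x).Nonempty := ⟨c A, Finset.mem_erase.2 ⟨Ne.symm hxc, hc A hA⟩⟩
        have : ({c (A.erase x)} : Set α) = {c A} := by
          rw [← hmax (A.erase x) hne, ← hmax A hA, hG]
        exact ⟨hG, Set.singleton_eq_singleton_iff.1 this⟩
      rintro ⟨A, x, y, hA, hxA, hxc, hyA, hnsx, h2, h3⟩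
      have hnsx' : ¬ SwitchAt c A x := fun h =>
        hnsx ((switchPair_iff_switchAt c hc hA hxA).2 h)
      obtain ⟨hG, hce⟩ := key A hA x hxA hxc hnsx'
      have hnex : (A.erase x).Nonempty := ⟨c A, Finset.mem_erase.2 ⟨Ne.symm hxc, hc A hA⟩⟩
      first
      | -- condition (ii): h2 = ¬Sw(A∖xy,A∖x), h3 = Sw(A∖y,A)
        { have hy : SwitchAt c A y := (switchPair_iff_switchAt c hc hA hyA).1 h3
          have hyG : y ∈ GammaMin c (A.erase x) := hG ▸ (Or.inr hy : y ∈ GammaMin c A)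
          rcases (mem_gammaMin c _ y).1 hyG with h | h
          · exact hy.2.2.1 (h.trans hce)
          · exact h2 ((switchPair_iff_switchAt c hc hnex h.1).2 h) }
      | -- condition (iii): h2 = ¬Sw(A∖y,A), h3 = Sw((A∖x)∖y, A∖x)
        { have hyex : y ∈ A.erase x := switchPair_mem c h3
          have hy : SwitchAt c (A.erase x) y :=
            (switchPair_iff_switchAt c hc hnex hyex).1 h3
          have hyG : y ∈ GammaMin c A := hG ▸ (Or.inr hy : y ∈ GammaMin c (A.erase x))
          rcases (mem_gammaMin c _ y).1 hyG with h | h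
          · exact hy.2.2.1 (h ▸ hce.symm)
          · exact h2 ((switchPair_iff_switchAt c hc hA hyA).2 h) }
    }
  · rintro ⟨⟨hPasym, hPacyc⟩, hii, hiii⟩
    set q : α → α → Prop := fun a b => Relation.TransGen (PRel c) a b ∨ a = b with hq
    haveI : IsPartialOrder α q :=
      { refl := fun a => Or.inr rfl
        trans := by
          rintro a b d (h1 | rfl) (h2 | rfl)
          · exact Or.inl (h1.trans h2)
          · exact Or.inl h1
          · exact Or.inl h2
          · exact Or.inr rfl
        antisymm := by
          rintro a b (h1 | rfl) (h2 | h)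
          · exact absurd (h1.trans h2) (hPacyc a)
          · exact h.symm
          · rfl
          · rfl }
    obtain ⟨s, hs, hqs⟩ := extend_partialOrder q
    haveI := hs
    refine ⟨fun a b => s a b ∧ a ≠ b, ⟨?_, ?_, ?_⟩, ?_, ?_⟩
    · rintro x y ⟨h1, hne⟩ ⟨h2, _⟩
      exact hne (antisymm h1 h2)
    · rintro x y z ⟨h1, hne1⟩ ⟨h2, hne2⟩
      refine ⟨Trans.trans h1 h2, fun he => hne1 (antisymm h1 (he ▸ h2))⟩
    · intro x y hxy
      rcases total_of s x y with h | h
      · exact Or.inl ⟨h, hxy⟩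
      · exact Or.inr ⟨h, hxy.symm⟩
    · -- maxSet condition
      have hPs : ∀ x y, PRel c x y → s x y ∧ x ≠ y :=
        fun x y h => ⟨hqs x y (Or.inl (Relation.TransGen.single h)), h.1⟩
      have hPS : ∀ A : Finset α, A.Nonempty → ∀ z, SwitchAt c A z → PRel c (c A) z := by
        rintro A hA z ⟨hzA, hne, hzc, hcc⟩
        exact ⟨Ne.symm hzc, A, hc A hA, hzA, rfl, hcc⟩
      intro A hA
      ext z
      simp only [maxSet, Set.mem_setOf_eq, Set.mem_singleton_iff]
      constructor
      · rintro ⟨hz, hun⟩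
        rcases (mem_gammaMin c A z).1 hz with h | h
        · exact h
        · exact absurd (hPs _ _ (hPS A hA z h)) (fun hp => hun (c A) (Or.inl rfl) hp)
      · rintro rfl
        refine ⟨Or.inl rfl, ?_⟩
        intro w hw hrw
        rcases (mem_gammaMin c A w).1 hw with h | h
        · exact hrw.2 (h ▸ rfl)
        · have h1 := hPs _ _ (hPS A hA w h)
          exact h1.2 (antisymm h1.1 hrw.1)
    · -- stability
      intro A hA x hxA hxG
      have hxc : x ≠ c A := fun h => hxG (Or.inl h)
      have hnsx : ¬ SwitchAt c A x := fun h => hxG (Or.inr h)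
      have hne : (A.erase x).Nonempty := ⟨c A, Finset.mem_erase.2 ⟨Ne.symm hxc, hc A hA⟩⟩
      have hcc : c A = c (A.erase x) := by
        by_contra h
        exact hnsx ⟨hxA, hne, hxc, h⟩
      ext z
      rw [mem_gammaMin, mem_gammaMin, ← hcc]
      constructor
      · rintro (h | h)
        · exact Or.inl h
        · -- S_{A\x} ⊆ S_A via (iii)
          right
          by_contra hn
          refine hiii ⟨A, x, z, hA, hxA, hxc, Finset.mem_of_mem_erase h.1, ?_, ?_, ?_⟩
          · exact fun hsp => hnsx ((switchPair_iff_switchAt c hc hA hxA).1 hsp)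
          · exact fun hsp => hn ((switchPair_iff_switchAt c hc hA
              (Finset.mem_of_mem_erase h.1)).1 hsp)
          · exact (switchPair_iff_switchAt c hc hne h.1).2 h
      · rintro (h | h)
        · exact Or.inl h
        · -- S_A ⊆ S_{A\x} via (ii)
          right
          have hzx : z ≠ x := fun he => hnsx (he ▸ h)
          have hzex : z ∈ A.erase x := Finset.mem_erase.2 ⟨hzx, h.1⟩
          by_contra hn
          refine hii ⟨A, x, z, hA, hxA, hxc, h.1, ?_, ?_, ?_⟩
          · exact fun hsp => hnsx ((switchPair_iff_switchAt c hc hA hxA).1 hsp)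
          · exact fun hsp => hn ((switchPair_iff_switchAt c hc hne hzex).1 hsp)
          · exact (switchPair_iff_switchAt c hc hA h.1).2 h
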